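/- Let Y ≤ ℤ/nℤ ⋊ ⟨α⟩ have exactly two orbits O_1, O_2 on ℤ/nℤ with trivial radical and n = 2^t. Then t ≤ 2; if t = 2 then |O_1| = |O_2| = 2, α acts as x ↦ −x on ℤ/4ℤ, and {O_1, O_2} = {{0, i}, {2, −i}} for some i ∈ {1, 3}. -/

import Mathlib

/-!
Every element of `Y` is an affine map `x ↦ u * x + c` with `u` a unit, i.e. odd, and a trivial
radical means `Y` contains no nontrivial translation, so the slope `u` determines the element.
Odd units fix `h = 2 ^ (t - 1)`, hence translation by `h` commutes with `Y` and permutes the two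
orbits; it cannot fix `O₁`, so it swaps them. Both orbits then have `2 ^ (t - 1)` elements, as
many as there are units, and the slope map from `Y` to the units is a bijection. For `t ≥ 3` the
element with slope `1 + h` squares to a translation, which forces its constant `c` to satisfy
`2 * c = 0`; both `c = 0` and `c = h` move some point `x` to `x + h` inside its own orbit.
For `t = 2` the group is `{1, x ↦ -x + c}` and everything is read off in `ℤ/4ℤ`.
-/

open MulAction

section Orbits
variable {M : Type*} {Y : Subgroup (Equiv.Perm M)}

lemma image_orbit_of_commute {τ : Equiv.Perm M} (hτ : ∀ y ∈ Y, ∀ x, y (τ x) = τ (y x))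
    (a : M) : τ '' orbit Y a = orbit Y (τ a) := by
  rw [orbit, orbit, ← Set.range_comp]
  exact congrArg Set.range (funext fun g => (hτ g g.2 a).symm)

lemma image_orbit_of_mem {y : Equiv.Perm M} (hy : y ∈ Y) (a : M) :
    y '' orbit Y a = orbit Y a :=
  smul_orbit (⟨y, hy⟩ : Y) a

lemma apply_mem_orbit {y : Equiv.Perm M} (hy : y ∈ Y) (x : M) : y x ∈ orbit Y x :=
  mem_orbit x (⟨y, hy⟩ : Y)

lemma orbit_eq_or_eq_compl {O : Set M} (hO : ∃ a, O = orbit Y a) (hOc : ∃ a, Oᶜ = orbit Y a)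
    (x : M) : orbit Y x = O ∨ orbit Y x = Oᶜ := by
  obtain ⟨a, ha⟩ := hO
  obtain ⟨b, hb⟩ := hOc
  by_cases hx : x ∈ O
  · rw [ha] at hx ⊢
    exact .inl (orbit_eq_iff.2 hx)
  · rw [← Set.mem_compl_iff, hb] at hx
    rw [hb]
    exact .inr (orbit_eq_iff.2 hx)

lemma ncard_orbit_le [Finite Y] (a : M) : (orbit Y a).ncard ≤ Nat.card Y := by
  rw [← Nat.card_coe_set_eq]
  exact Nat.card_le_card_of_surjective _ Set.rangeFactorization_surjective

end Orbits

lemma Set.pair_compl_eq_pair_compl {α : Type*} {A B : Set α} (h : B = A ∨ B = Aᶜ) :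
    ({A, Aᶜ} : Set (Set α)) = {B, Bᶜ} := by
  rcases h with rfl | rfl
  · rfl
  · rw [compl_compl, Set.pair_comm]

section Affine
variable {R : Type*} [CommRing R]

/-- The group `R ⋊ U` acting on `R` by `x ↦ u * x + c`; the constant `c` is the image of `0`. -/
def affinePerms (U : Subgroup Rˣ) : Subgroup (Equiv.Perm R) where
  carrier := {y | ∃ u ∈ U, ∀ x, y x = u * x + y 0}
  mul_mem' := by
    rintro y z ⟨u, hu, hy⟩ ⟨v, hv, hz⟩
    refine ⟨u * v, U.mul_mem hu hv, fun x => ?_⟩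
    simp only [Equiv.Perm.mul_apply]
    rw [hz x, hy (v * x + z 0), hy (z 0), Units.val_mul]
    ring
  one_mem' := ⟨1, U.one_mem, by simp⟩
  inv_mem' := by
    rintro y ⟨u, hu, hy⟩
    refine ⟨u⁻¹, U.inv_mem hu, fun x => y.injective ?_⟩
    have h0 := hy (y⁻¹ 0)
    simp only [Equiv.Perm.coe_inv, Equiv.apply_symm_apply] at h0 ⊢
    rw [hy, mul_add, ← mul_assoc, Units.mul_inv, one_mul]
    linear_combination h0

lemma mem_affinePerms {U : Subgroup Rˣ} {y : Equiv.Perm R} :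
    y ∈ affinePerms U ↔ ∃ u ∈ U, ∀ x, y x = u * x + y 0 :=
  Iff.rfl

lemma closure_le_affinePerms {u : Rˣ} {σ : Equiv.Perm R} (hσ : ∀ x, σ x = u * x) :
    Subgroup.closure ((Set.range fun a : R => Equiv.addLeft a) ∪ {σ})
      ≤ affinePerms (Subgroup.zpowers u) := by
  rw [Subgroup.closure_le]
  rintro _ (⟨a, rfl⟩ | rfl)
  · exact ⟨1, one_mem _, fun x => by simp [add_comm]⟩
  · exact ⟨u, Subgroup.mem_zpowers u, fun x => by simp [hσ]⟩

lemma eq_of_apply_eq_mul_add {Y : Subgroup (Equiv.Perm R)}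
    (htr : ∀ c, Equiv.addRight c ∈ Y → c = 0) {y z : Equiv.Perm R} (hy : y ∈ Y) (hz : z ∈ Y)
    {u : R} (hyu : ∀ x, y x = u * x + y 0) (hzu : ∀ x, z x = u * x + z 0) : y = z := by
  have hc : z 0 - y 0 = 0 := by
    refine htr _ ?_
    convert Y.mul_mem hz (Y.inv_mem hy) using 1
    ext x
    have hx := hyu (y⁻¹ x)
    rw [Equiv.Perm.coe_inv, Equiv.apply_symm_apply] at hx
    rw [Equiv.coe_addRight, Equiv.Perm.mul_apply, hzu (y⁻¹ x)]
    linear_combination hx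
  ext x
  rw [hyu, hzu]
  linear_combination -hc

lemma exists_mem_apply_eq_mul_add [Finite R] {U : Subgroup Rˣ} {Y : Subgroup (Equiv.Perm R)}
    (hY : Y ≤ affinePerms U) (htr : ∀ c, Equiv.addRight c ∈ Y → c = 0) (a : R)
    (hcard : Nat.card Rˣ ≤ (orbit Y a).ncard) (u : Rˣ) :
    ∃ y ∈ Y, ∀ x, y x = u * x + y 0 := by
  choose f _ hf using fun g : Y => mem_affinePerms.1 (hY g.2)
  have hinj : Function.Injective f := fun g g' hgg' =>
    Subtype.ext (eq_of_apply_eq_mul_add htr g.2 g'.2 (hf g) (hgg' ▸ hf g'))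
  obtain ⟨g, rfl⟩ := (hinj.bijective_of_nat_card_le (hcard.trans (ncard_orbit_le a))).2 u
  exact ⟨g, g.2, hf g⟩

end Affine

namespace ZMod

lemma addAut_apply_eq_mul {n : ℕ} (α : AddAut (ZMod n)) (x : ZMod n) :
    α x = (AddAutEquivUnits n α).toMul * x := by
  conv_lhs => rw [← (AddAutEquivUnits n).symm_apply_apply α]
  rfl

lemma closure_le_affinePerms {n : ℕ} (α : AddAut (ZMod n)) :
    Subgroup.closure ((Set.range fun a : ZMod n => Equiv.addLeft a) ∪ {α.toEquiv})
      ≤ affinePerms (Subgroup.zpowers (AddAutEquivUnits n α).toMul) :=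
  _root_.closure_le_affinePerms (addAut_apply_eq_mul α)

section TwoPow
variable {t : ℕ}

lemma two_pow_pred_ne_zero (ht : 1 ≤ t) : (2 : ZMod (2 ^ t)) ^ (t - 1) ≠ 0 := by
  have : ((2 ^ (t - 1) : ℕ) : ZMod (2 ^ t)) ≠ 0 := by
    rw [Ne, natCast_eq_zero_iff, Nat.pow_dvd_pow_iff_le_right (by norm_num)]
    omega
  exact_mod_cast this

lemma two_mul_two_pow_pred (ht : 1 ≤ t) : 2 * (2 : ZMod (2 ^ t)) ^ (t - 1) = 0 := by
  rw [← pow_succ', Nat.sub_add_cancel ht]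
  exact_mod_cast natCast_self (2 ^ t)

lemma neg_two_pow_pred (ht : 1 ≤ t) : -(2 : ZMod (2 ^ t)) ^ (t - 1) = 2 ^ (t - 1) :=
  neg_eq_of_add_eq_zero_left (by rw [← two_mul]; exact two_mul_two_pow_pred ht)

lemma two_pow_pred_mul_self (ht : 2 ≤ t) :
    (2 : ZMod (2 ^ t)) ^ (t - 1) * 2 ^ (t - 1) = 0 := by
  rw [← pow_add, show t - 1 + (t - 1) = t + (t - 2) by omega, pow_add,
    show (2 : ZMod (2 ^ t)) ^ t = 0 by exact_mod_cast natCast_self (2 ^ t), zero_mul]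

lemma odd_val_of_isUnit (ht : 1 ≤ t) {u : ZMod (2 ^ t)} (hu : IsUnit u) : Odd u.val := by
  rw [← natCast_zmod_val u, isUnit_natCast_iff_not_dvd_pow Nat.prime_two ht] at hu
  exact Nat.odd_iff.2 (by omega)

lemma isUnit_mul_two_pow_pred (ht : 1 ≤ t) {u : ZMod (2 ^ t)} (hu : IsUnit u) :
    u * 2 ^ (t - 1) = 2 ^ (t - 1) := by
  obtain ⟨m, hm⟩ := odd_val_of_isUnit ht hu
  rw [← natCast_zmod_val u, hm]
  push_cast
  linear_combination (m : ZMod (2 ^ t)) * two_mul_two_pow_pred ht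

lemma isUnit_one_add_two_pow (ht : 1 ≤ t) {k : ℕ} (hk : 1 ≤ k) :
    IsUnit (1 + (2 : ZMod (2 ^ t)) ^ k) := by
  have h2 : 2 ∣ 2 ^ k := dvd_pow_self 2 (by omega)
  have : IsUnit ((1 + 2 ^ k : ℕ) : ZMod (2 ^ t)) :=
    (isUnit_natCast_iff_not_dvd_pow Nat.prime_two ht).2 (by omega)
  exact_mod_cast this

lemma eq_zero_or_eq_two_pow_pred (ht : 1 ≤ t) {c : ZMod (2 ^ t)} (hc : 2 * c = 0) :
    c = 0 ∨ c = 2 ^ (t - 1) := by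
  have hpow : 2 ^ t = 2 * 2 ^ (t - 1) := by rw [← pow_succ', Nat.sub_add_cancel ht]
  have hdvd : 2 * 2 ^ (t - 1) ∣ 2 * c.val := by
    rw [← hpow, ← natCast_eq_zero_iff]
    rw [← natCast_zmod_val c] at hc
    exact_mod_cast hc
  obtain ⟨k, hk⟩ := Nat.dvd_of_mul_dvd_mul_left (by norm_num) hdvd
  have hk2 : k < 2 := by
    by_contra! hk2
    have := c.val_lt
    rw [hk, hpow] at this
    nlinarith [Nat.one_le_two_pow (n := t - 1)]
  rw [← natCast_zmod_val c, hk]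
  interval_cases k <;> simp

lemma card_units_two_pow (ht : 1 ≤ t) : Nat.card (ZMod (2 ^ t))ˣ = 2 ^ (t - 1) := by
  rw [Nat.card_eq_fintype_card, card_units_eq_totient, Nat.totient_prime_pow Nat.prime_two ht]
  simp

end TwoPow

lemma units_eq_one_or_neg_one (u : (ZMod (2 ^ 2))ˣ) : u = 1 ∨ u = -1 := by
  revert u
  decide

lemma compl_pair_zero {i : ZMod (2 ^ 2)} (hi : i = 1 ∨ i = 3) :
    ({0, i}ᶜ : Set (ZMod (2 ^ 2))) = {2, -i} := by
  rcases hi with rfl | rfl <;> ext x <;> revert x <;> decide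

end ZMod

section TwoOrbits
variable {G : Type*} [AddGroup G] {Y : Subgroup (Equiv.Perm G)} {O : Set G} {c : G}

lemma eq_zero_of_addRight_mem (hO : ∃ a, O = orbit Y a)
    (hrad : {u | (fun x => x + u) '' O = O} = {0}) (hc : Equiv.addRight c ∈ Y) : c = 0 := by
  obtain ⟨a, rfl⟩ := hO
  have : c ∈ {u | (fun x => x + u) '' orbit Y a = orbit Y a} := image_orbit_of_mem hc a
  rwa [hrad] at this

lemma add_mem_iff_notMem (hc : -c = c) (himg : (· + c) '' O = Oᶜ) (x : G) :
    x + c ∈ O ↔ x ∉ O := by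
  rw [← Set.mem_compl_iff, ← himg, Set.image_add_right, Set.mem_preimage, hc]

lemma add_notMem_orbit (hc : -c = c) (himg : (· + c) '' O = Oᶜ)
    (horb : ∀ x, orbit Y x = O ∨ orbit Y x = Oᶜ) (x : G) : x + c ∉ orbit Y x := by
  have hx := mem_orbit_self (M := Y) x
  rcases horb x with h | h <;> rw [h] at hx ⊢
  · exact fun hxc => (add_mem_iff_notMem hc himg x).1 hxc hx
  · exact fun hxc => hxc ((add_mem_iff_notMem hc himg x).2 hx)

lemma ncard_compl_eq_of_image_add (himg : (· + c) '' O = Oᶜ) : Oᶜ.ncard = O.ncard := by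
  rw [← himg, Set.ncard_image_of_injective _ (add_left_injective c)]

end TwoOrbits

section TwoPowOrbits
variable {t : ℕ} {U : Subgroup (ZMod (2 ^ t))ˣ} {Y : Subgroup (Equiv.Perm (ZMod (2 ^ t)))}
  {O : Set (ZMod (2 ^ t))}

lemma image_add_two_pow_pred_orbit (hY : Y ≤ affinePerms U) (ht : 1 ≤ t) (a : ZMod (2 ^ t)) :
    (· + 2 ^ (t - 1)) '' orbit Y a = orbit Y (a + 2 ^ (t - 1)) := by
  refine image_orbit_of_commute (τ := Equiv.addRight _) (fun y hy x => ?_) a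
  obtain ⟨u, -, hu⟩ := hY hy
  rw [Equiv.coe_addRight, hu, hu x, mul_add, ZMod.isUnit_mul_two_pow_pred ht u.isUnit]
  ring

lemma image_add_two_pow_pred_eq_compl (hY : Y ≤ affinePerms U) (ht : 1 ≤ t)
    (hO : ∃ a, O = orbit Y a) (horb : ∀ x, orbit Y x = O ∨ orbit Y x = Oᶜ)
    (hrad : {u | (fun x => x + u) '' O = O} = {0}) :
    (· + 2 ^ (t - 1)) '' O = Oᶜ := by
  obtain ⟨a, rfl⟩ := hO
  rw [image_add_two_pow_pred_orbit hY ht]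
  refine (horb _).resolve_left fun hfix => ZMod.two_pow_pred_ne_zero ht ?_
  have : (2 : ZMod (2 ^ t)) ^ (t - 1) ∈ {u | (fun x => x + u) '' orbit Y a = orbit Y a} := by
    rw [Set.mem_ofPred_eq, image_add_two_pow_pred_orbit hY ht, hfix]
  rwa [hrad] at this

lemma ncard_orbit_eq_two_pow_pred (ht : 1 ≤ t) (himg : (· + 2 ^ (t - 1)) '' O = Oᶜ)
    (horb : ∀ x, orbit Y x = O ∨ orbit Y x = Oᶜ) (x : ZMod (2 ^ t)) :
    (orbit Y x).ncard = 2 ^ (t - 1) := by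
  have hsum := Set.ncard_add_ncard_compl O
  have hpow : 2 ^ t = 2 * 2 ^ (t - 1) := by rw [← pow_succ', Nat.sub_add_cancel ht]
  rw [Nat.card_zmod, ncard_compl_eq_of_image_add himg] at hsum
  rcases horb x with h | h <;> rw [h]
  · omega
  · rw [ncard_compl_eq_of_image_add himg]
    omega

lemma le_two_of_add_two_pow_pred_notMem_orbit (htr : ∀ c, Equiv.addRight c ∈ Y → c = 0)
    (hsep : ∀ x : ZMod (2 ^ t), x + 2 ^ (t - 1) ∉ orbit Y x)
    (hsurj : ∀ u : (ZMod (2 ^ t))ˣ, ∃ y ∈ Y, ∀ x, y x = u * x + y 0) : t ≤ 2 := by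
  by_contra! ht
  set h : ZMod (2 ^ t) := 2 ^ (t - 1)
  obtain ⟨y, hy, hyx⟩ :=
    hsurj (ZMod.isUnit_one_add_two_pow (t := t) (k := t - 1) (by omega) (by omega)).unit
  rw [IsUnit.unit_spec] at hyx
  -- `(1 + h) ^ 2 = 1`, so `y * y` is a translation
  have hsq : (2 + h) * y 0 = 0 := by
    refine htr _ ?_
    convert Y.mul_mem hy hy using 1
    ext x
    rw [Equiv.coe_addRight, Equiv.Perm.mul_apply, hyx (y x), hyx x]
    linear_combination (-x) * ZMod.two_mul_two_pow_pred (t := t) (by omega)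
      - x * ZMod.two_pow_pred_mul_self (t := t) (by omega)
  -- `2 + h = 2 * (1 + 2 ^ (t - 2))`, and the second factor is a unit
  have h2 : 2 * y 0 = 0 := by
    refine (ZMod.isUnit_one_add_two_pow (t := t) (k := t - 2) (by omega)
      (by omega)).mul_right_eq_zero.1 ?_
    have : (2 : ZMod (2 ^ t)) * 2 ^ (t - 2) = h := by rw [← pow_succ']; congr 1; omega
    linear_combination hsq + y 0 * this
  rcases ZMod.eq_zero_or_eq_two_pow_pred (by omega) h2 with h0 | hh
  · have h1 := apply_mem_orbit hy 1
    rw [hyx, h0, mul_one, add_zero] at h1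
    exact hsep 1 h1
  · exact hsep 0 (by simpa [hh] using apply_mem_orbit hy 0)

end TwoPowOrbits

section Four
variable {Y : Subgroup (Equiv.Perm (ZMod (2 ^ 2)))} {y : Equiv.Perm (ZMod (2 ^ 2))}

lemma exists_orbit_zero_eq_pair {U : Subgroup (ZMod (2 ^ 2))ˣ} (hY : Y ≤ affinePerms U)
    (htr : ∀ c, Equiv.addRight c ∈ Y → c = 0) (hsep : (2 : ZMod (2 ^ 2)) ∉ orbit Y 0)
    (hcard : (orbit Y (0 : ZMod (2 ^ 2))).ncard = 2) (hy : y ∈ Y) (hyx : ∀ x, y x = -x + y 0) :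
    ∃ i : ZMod (2 ^ 2), (i = 1 ∨ i = 3) ∧ orbit Y 0 = {0, i} := by
  have hsub : orbit Y (0 : ZMod (2 ^ 2)) ⊆ {0, y 0} := by
    rintro _ ⟨g, rfl⟩
    obtain ⟨v, -, hv⟩ := hY g.2
    rcases ZMod.units_eq_one_or_neg_one v with rfl | rfl
    · have hg : (g : Equiv.Perm _) = 1 := eq_of_apply_eq_mul_add htr g.2 Y.one_mem hv (by simp)
      exact .inl (DFunLike.congr_fun hg 0)
    · have hg : (g : Equiv.Perm _) = y :=
        eq_of_apply_eq_mul_add htr g.2 hy hv (by simpa using hyx)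
      exact .inr (DFunLike.congr_fun hg 0)
  have heq : orbit Y 0 = {0, y 0} := Set.eq_of_subset_of_ncard_le hsub
    (by rw [hcard]; exact (Set.ncard_insert_le _ _).trans (by simp))
  have h0 : y 0 ≠ 0 := fun h => by
    rw [heq, h, Set.pair_eq_singleton, Set.ncard_singleton] at hcard
    exact absurd hcard (by norm_num)
  have h2 : y 0 ≠ 2 := fun h => hsep (by rw [heq, h]; exact .inr rfl)
  exact ⟨y 0, by revert h0 h2; generalize y 0 = i; revert i; decide, heq⟩

lemma eq_neg_one_of_mem_affinePerms_zpowers {a : (ZMod (2 ^ 2))ˣ}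
    (hy : y ∈ affinePerms (Subgroup.zpowers a)) (hyx : ∀ x, y x = -x + y 0) : a = -1 := by
  obtain ⟨v, hv, hvx⟩ := hy
  have hv1 : v = -1 := Units.ext (by
    rw [Units.val_neg, Units.val_one]
    linear_combination (hvx 1).symm.trans (hyx 1))
  rcases ZMod.units_eq_one_or_neg_one a with rfl | rfl
  · rw [Subgroup.zpowers_one_eq_bot, Subgroup.mem_bot, hv1] at hv
    exact absurd hv (by decide)
  · rfl

end Four

theorem stmt_13_general (n t : ℕ) (hn : n = 2 ^ t)
    (α : AddAut (ZMod n))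
    (X : Subgroup (Equiv.Perm (ZMod n)))
    (hX : X = Subgroup.closure
      ((Set.range fun a : ZMod n => Equiv.addLeft a) ∪ {α.toEquiv}))
    (Y : Subgroup (Equiv.Perm (ZMod n))) (hYX : Y ≤ X)
    (O₁ O₂ : Set (ZMod n))
    (hO₁ : ∃ a, O₁ = MulAction.orbit Y a) (hO₂ : ∃ a, O₂ = MulAction.orbit Y a)
    (hcover : O₁ ∪ O₂ = Set.univ) (hdisj : Disjoint O₁ O₂)
    (hrad : {u : ZMod n | (fun x => x + u) '' O₁ = O₁} = {0}) :
    t ≤ 2 ∧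
      (t = 2 → O₁.ncard = 2 ∧ O₂.ncard = 2 ∧ (∀ x : ZMod n, α x = -x) ∧
        ∃ i : ZMod n, (i = 1 ∨ i = 3) ∧
          ({O₁, O₂} : Set (Set (ZMod n))) = {{0, i}, {2, -i}}) := by
  subst hn
  obtain rfl : O₁ᶜ = O₂ := IsCompl.compl_eq ⟨hdisj, codisjoint_iff.2 hcover⟩
  have hY := hYX.trans (hX ▸ ZMod.closure_le_affinePerms α)
  have htr : ∀ c, Equiv.addRight c ∈ Y → c = 0 := fun _ => eq_zero_of_addRight_mem hO₁ hrad
  have horb := orbit_eq_or_eq_compl hO₁ hO₂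
  obtain rfl | ht := Nat.eq_zero_or_pos t
  · exact ⟨by omega, fun h => absurd h (by decide)⟩
  have himg := image_add_two_pow_pred_eq_compl hY ht hO₁ horb hrad
  have hsep := add_notMem_orbit (ZMod.neg_two_pow_pred ht) himg horb
  have hcard := ncard_orbit_eq_two_pow_pred ht himg horb
  have hsurj := exists_mem_apply_eq_mul_add hY htr 0 (by rw [ZMod.card_units_two_pow ht, hcard])
  refine ⟨le_two_of_add_two_pow_pred_notMem_orbit htr hsep hsurj, fun ht2 => ?_⟩
  subst ht2
  obtain ⟨y, hy, hyx⟩ := hsurj (-1)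
  simp only [Units.val_neg, Units.val_one, neg_one_mul] at hyx
  obtain ⟨i, hi, hO⟩ := exists_orbit_zero_eq_pair hY htr (hsep 0) (hcard 0) hy hyx
  have hα := eq_neg_one_of_mem_affinePerms_zpowers (hY hy) hyx
  refine ⟨hO₁.elim fun a ha => ha ▸ hcard a, hO₂.elim fun a ha => ha ▸ hcard a,
    fun x => by rw [ZMod.addAut_apply_eq_mul, hα]; simp, i, hi, ?_⟩
  rw [← ZMod.compl_pair_zero hi, ← hO]
  exact Set.pair_compl_eq_pair_compl (horb 0)

theorem stmt_13 (n t : ℕ) (hn : n = 2 ^ t) [NeZero n]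
    (α : AddAut (ZMod n))
    (X : Subgroup (Equiv.Perm (ZMod n)))
    (hX : X = Subgroup.closure
      ((Set.range fun a : ZMod n => Equiv.addLeft a) ∪ {α.toEquiv}))
    (Y : Subgroup (Equiv.Perm (ZMod n))) (hYX : Y ≤ X)
    (O₁ O₂ : Set (ZMod n))
    (hO₁ : ∃ a, O₁ = MulAction.orbit Y a) (hO₂ : ∃ a, O₂ = MulAction.orbit Y a)
    (hcover : O₁ ∪ O₂ = Set.univ) (hdisj : Disjoint O₁ O₂)
    (hrad : {u : ZMod n | (fun x => x + u) '' O₁ = O₁} = {0}) :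
    t ≤ 2 ∧
      (t = 2 → O₁.ncard = 2 ∧ O₂.ncard = 2 ∧ (∀ x : ZMod n, α x = -x) ∧
        ∃ i : ZMod n, (i = 1 ∨ i = 3) ∧
          ({O₁, O₂} : Set (Set (ZMod n))) = {{0, i}, {2, -i}}) :=
  stmt_13_general n t hn α X hX Y hYX O₁ O₂ hO₁ hO₂ hcover hdisj hrad
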